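/- Let G be a crown-free graph containing a relaxed crown (H, I): I is independent, H = N(I), and for every v ∈ H there is a matching between H \ {v} and I saturating H \ {v}. Let G' be obtained from G by removing H ∪ I and adding a new vertex w adjacent to all vertices in (⋃_{u∈H} N(u)) \ (H ∪ I). Then mm(G) = mm(G') + |H| - 1. -/

import Mathlib

/-- A matching in a simple graph `G`, given as a finite set of edges of `G`
that are pairwise vertex-disjoint. -/
def IsMatching {V : Type*} (G : SimpleGraph V) (M : Finset (Sym2 V)) : Prop :=
  (∀ e ∈ M, e ∈ G.edgeSet) ∧
    ∀ e ∈ M, ∀ f ∈ M, e ≠ f → ∀ v, v ∈ e → v ∉ f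

/-- The maximum cardinality of a matching in `G`. -/
noncomputable def mm {V : Type*} (G : SimpleGraph V) : ℕ :=
  sSup {n | ∃ M : Finset (Sym2 V), IsMatching G M ∧ M.card = n}

/-- `(H, I)` is a (nonempty) crown of `G`: `I` is a nonempty independent set,
`H = N(I)`, and there is a matching between `H` and `I` saturating all of `H`. -/
def IsCrown {V : Type*} [DecidableEq V] (G : SimpleGraph V) (H I : Finset V) : Prop :=
  I.Nonempty ∧
  (∀ a ∈ I, ∀ b ∈ I, ¬ G.Adj a b) ∧
  (∀ b, b ∈ H ↔ ∃ a ∈ I, G.Adj a b) ∧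
  ∃ M : Finset (Sym2 V), IsMatching G M ∧
    (∀ e ∈ M, ∃ a ∈ H, ∃ b ∈ I, e = s(a, b)) ∧
    ∀ a ∈ H, ∃ e ∈ M, a ∈ e

/-- The graph obtained from `G` by removing all vertices of `H ∪ I` and adding a new
vertex (`none`) adjacent to all remaining vertices having a neighbor in `H`. -/
def relaxedCrownReduced {V : Type*} [DecidableEq V] (G : SimpleGraph V)
    (H I : Finset V) : SimpleGraph (Option V) where
  Adj a b :=
    match a, b with
    | some a, some b => G.Adj a b ∧ a ∉ H ∧ a ∉ I ∧ b ∉ H ∧ b ∉ I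
    | some a, none => (a ∉ H ∧ a ∉ I) ∧ ∃ u ∈ H, G.Adj u a
    | none, some b => (b ∉ H ∧ b ∉ I) ∧ ∃ u ∈ H, G.Adj u b
    | none, none => False
  symm := by
    constructor
    rintro (_ | a) (_ | b) h
    · exact h.elim
    · exact h
    · exact h
    · obtain ⟨h1, h2, h3, h4, h5⟩ := h
      exact ⟨h1.symm, h4, h5, h2, h3⟩
  loopless := by
    constructor
    rintro (_ | a) h
    · exact h.elim
    · exact G.irrefl h.1

/-!
Split a matching `M` of `G` into the edges meeting `H` (this includes every edge meeting `I`,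
since `H = N(I)`) and the edges outside `H ∪ I`; the latter form a matching of `G'`. There are at
most `|H|` edges of the first kind. If there are exactly `|H|`, each has exactly one end in `H`;
either one of them leaves `H ∪ I` and can be traded for an edge at `w` in `G'`, or they saturate
`H` into `I` and `(H, I)` is a crown. Hence `mm G ≤ mm G' + |H| - 1`.

Conversely, a maximum matching of `G'` lifts to `G`: an edge `w b` becomes `u b` for a neighbour
`u ∈ H` of `b`, and the relaxed crown supplies `|H| - 1` further edges between `H \ {u}` and `I`.
-/

open Finset

lemma card_union_of_forall_notMem {V : Type*} [DecidableEq V] {M N : Finset (Sym2 V)}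
    (hMN : ∀ e ∈ M, ∀ f ∈ N, ∀ v ∈ e, v ∉ f) : (M ∪ N).card = M.card + N.card :=
  card_union_of_disjoint <| disjoint_left.2 fun e he heN =>
    hMN e he e heN _ (Sym2.out_fst_mem e) (Sym2.out_fst_mem e)

noncomputable def eraseNoneEdges {V : Type*} (M : Finset (Sym2 (Option V))) : Finset (Sym2 V) :=
  M.preimage (Sym2.map some) (Sym2.map.injective (Option.some_injective V)).injOn

lemma card_eraseNoneEdges {V : Type*} {M' : Finset (Sym2 (Option V))}
    (hM' : ∀ e ∈ M', none ∉ e) : (eraseNoneEdges M').card = M'.card := by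
  classical
  rw [eraseNoneEdges, card_preimage, filter_true_of_mem]
  intro e he
  induction e using Sym2.ind with
  | h a b =>
    rcases a with _ | a
    · exact absurd (Sym2.mem_mk_left _ _) (hM' _ he)
    rcases b with _ | b
    · exact absurd (Sym2.mem_mk_right _ _) (hM' _ he)
    exact ⟨s(a, b), rfl⟩

namespace IsMatching

variable {V W : Type*} {G : SimpleGraph V} {M N : Finset (Sym2 V)}

lemma subset (hM : IsMatching G M) (hNM : N ⊆ M) : IsMatching G N :=
  ⟨fun e he => hM.1 e (hNM he), fun e he f hf => hM.2 e (hNM he) f (hNM hf)⟩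

lemma eq_of_mem (hM : IsMatching G M) {e f : Sym2 V} (he : e ∈ M) (hf : f ∈ M) {v : V}
    (hve : v ∈ e) (hvf : v ∈ f) : e = f :=
  by_contra fun hef => hM.2 e he f hf hef v hve hvf

lemma adj (hM : IsMatching G M) {e : Sym2 V} (he : e ∈ M) {x y : V} (hx : x ∈ e) (hy : y ∈ e)
    (hxy : x ≠ y) : G.Adj x y := by
  simpa [(Sym2.mem_and_mem_iff hxy).1 ⟨hx, hy⟩] using hM.1 e he

lemma singleton {a b : V} (hab : G.Adj a b) : IsMatching G {s(a, b)} :=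
  ⟨by simpa using hab, by simp⟩

lemma union [DecidableEq V] (hM : IsMatching G M) (hN : IsMatching G N)
    (hMN : ∀ e ∈ M, ∀ f ∈ N, ∀ v ∈ e, v ∉ f) : IsMatching G (M ∪ N) := by
  refine ⟨fun e he => (mem_union.1 he).elim (hM.1 e) (hN.1 e), ?_⟩
  intro e he f hf hef v hve hvf
  rcases mem_union.1 he with he | he <;> rcases mem_union.1 hf with hf | hf
  · exact hM.2 e he f hf hef v hve hvf
  · exact hMN e he f hf v hve hvf
  · exact hMN f hf e he v hvf hve
  · exact hN.2 e he f hf hef v hve hvf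

lemma image_map [DecidableEq W] {G' : SimpleGraph W} {f : V → W} (hf : Function.Injective f)
    (hM : IsMatching G M) (hadj : ∀ e ∈ M, e.map f ∈ G'.edgeSet) :
    IsMatching G' (M.image (Sym2.map f)) := by
  refine ⟨by simpa using hadj, ?_⟩
  simp only [mem_image]
  rintro _ ⟨e, he, rfl⟩ _ ⟨e', he', rfl⟩ hne _ hv hv'
  obtain ⟨v, hve, rfl⟩ := Sym2.mem_map.1 hv
  obtain ⟨v', hve', hvv'⟩ := Sym2.mem_map.1 hv'
  rw [hf hvv'] at hve'
  exact hM.2 e he e' he' (fun h => hne (h ▸ rfl)) v hve hve'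

lemma preimage_map {G' : SimpleGraph W} {M' : Finset (Sym2 W)} {f : V → W}
    (hf : Function.Injective f) (hM' : IsMatching G' M')
    (hadj : ∀ a b, G'.Adj (f a) (f b) → G.Adj a b) :
    IsMatching G (M'.preimage (Sym2.map f) (Sym2.map.injective hf).injOn) := by
  refine ⟨fun e he => ?_, fun e he e' he' hne v hv hv' => ?_⟩
  · rw [mem_preimage] at he
    induction e using Sym2.ind with
    | h a b => exact hadj a b (hM'.1 _ he)
  · exact hM'.2 _ (mem_preimage.1 he) _ (mem_preimage.1 he')
      (fun h => hne (Sym2.map.injective hf h)) (f v)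
      (Sym2.mem_map.2 ⟨v, hv, rfl⟩) (Sym2.mem_map.2 ⟨v, hv', rfl⟩)

lemma card_le_of_forall_exists_mem (hM : IsMatching G M) {S : Finset V}
    (hS : ∀ e ∈ M, ∃ v ∈ S, v ∈ e) : M.card ≤ S.card :=
  card_le_card_of_forall_subsingleton (fun e v => v ∈ e) (fun e he => by
      obtain ⟨v, hv, hve⟩ := hS e he
      exact ⟨v, hv, hve⟩)
    fun _ _ _ he _ hf => hM.eq_of_mem he.1 hf.1 he.2 hf.2

variable [DecidableEq V] {S : Finset V}

lemma exists_mem_of_card_le (hM : IsMatching G M) (hS : ∀ e ∈ M, ∃ v ∈ S, v ∈ e)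
    (hcard : S.card ≤ M.card) {v : V} (hv : v ∈ S) : ∃ e ∈ M, v ∈ e := by
  by_contra! hcov
  have hle := hM.card_le_of_forall_exists_mem (S := S.erase v) fun e he => by
    obtain ⟨w, hw, hwe⟩ := hS e he
    exact ⟨w, mem_erase.2 ⟨fun h => hcov e he (h ▸ hwe), hw⟩, hwe⟩
  have := card_erase_lt_of_mem hv
  omega

lemma eq_of_mem_of_card_le (hM : IsMatching G M) (hS : ∀ e ∈ M, ∃ v ∈ S, v ∈ e)
    (hcard : S.card ≤ M.card) {e : Sym2 V} (he : e ∈ M) {v w : V} (hv : v ∈ S) (hw : w ∈ S)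
    (hve : v ∈ e) (hwe : w ∈ e) : v = w := by
  by_contra hvw
  have hle := hM.card_le_of_forall_exists_mem (S := S.erase v) fun f hf => by
    by_cases hfe : f = e
    · exact ⟨w, mem_erase.2 ⟨Ne.symm hvw, hw⟩, hfe ▸ hwe⟩
    · obtain ⟨u, hu, huf⟩ := hS f hf
      exact ⟨u, mem_erase.2 ⟨fun h => hfe (hM.eq_of_mem hf he (h ▸ huf) hve), hu⟩, huf⟩
  have := card_erase_lt_of_mem hv
  omega

end IsMatching

section mm

variable {V : Type*} {G : SimpleGraph V}

lemma nonempty_card_isMatching (G : SimpleGraph V) :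
    {n | ∃ M : Finset (Sym2 V), IsMatching G M ∧ M.card = n}.Nonempty :=
  ⟨0, ∅, ⟨by simp, by simp⟩, rfl⟩

lemma mm_le {n : ℕ} (h : ∀ M : Finset (Sym2 V), IsMatching G M → M.card ≤ n) : mm G ≤ n :=
  csSup_le (nonempty_card_isMatching G) (by rintro m ⟨M, hM, rfl⟩; exact h M hM)

variable [Fintype V]

lemma bddAbove_card_isMatching (G : SimpleGraph V) :
    BddAbove {n | ∃ M : Finset (Sym2 V), IsMatching G M ∧ M.card = n} :=
  ⟨Fintype.card (Sym2 V), by rintro n ⟨M, _, rfl⟩; exact card_le_univ M⟩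

lemma le_mm {M : Finset (Sym2 V)} (hM : IsMatching G M) : M.card ≤ mm G :=
  le_csSup (bddAbove_card_isMatching G) ⟨M, hM, rfl⟩

lemma exists_isMatching_card_eq_mm (G : SimpleGraph V) :
    ∃ M : Finset (Sym2 V), IsMatching G M ∧ M.card = mm G :=
  Nat.sSup_mem (nonempty_card_isMatching G) (bddAbove_card_isMatching G)

end mm

lemma notMem_of_mem_neighborhood {V : Type*} {G : SimpleGraph V} {H I : Finset V}
    (hind : ∀ a ∈ I, ∀ b ∈ I, ¬ G.Adj a b)
    (hN : ∀ b, b ∈ H ↔ ∃ a ∈ I, G.Adj a b) {x : V} (hx : x ∈ H) : x ∉ I := fun hxI => by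
  obtain ⟨a, ha, hax⟩ := (hN x).1 hx
  exact hind a ha x hxI hax

section RelaxedCrown

variable {V : Type*} [DecidableEq V] {G : SimpleGraph V} {H I : Finset V}

lemma IsMatching.eraseNoneEdges {M' : Finset (Sym2 (Option V))}
    (hM' : IsMatching (relaxedCrownReduced G H I) M') : IsMatching G (eraseNoneEdges M') :=
  hM'.preimage_map (Option.some_injective V) fun _ _ h => h.1

lemma notMem_of_mem_eraseNoneEdges {M' : Finset (Sym2 (Option V))}
    (hM' : IsMatching (relaxedCrownReduced G H I) M') {e : Sym2 V} (he : e ∈ eraseNoneEdges M')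
    {v : V} (hv : v ∈ e) : v ∉ H ∧ v ∉ I := by
  rw [eraseNoneEdges, mem_preimage, ← Sym2.other_spec hv, Sym2.map_mk] at he
  exact ⟨(hM'.1 _ he).2.1, (hM'.1 _ he).2.2.1⟩

lemma card_sub_one_le_card_of_saturating (hHI : ∀ x ∈ H, x ∉ I) {u : V}
    {M : Finset (Sym2 V)} (hform : ∀ e ∈ M, ∃ a ∈ H, a ≠ u ∧ ∃ b ∈ I, e = s(a, b))
    (hsat : ∀ a ∈ H, a ≠ u → ∃ e ∈ M, a ∈ e) : H.card - 1 ≤ M.card := by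
  refine (H.pred_card_le_card_erase (a := u)).trans <| card_le_card_of_forall_subsingleton
    (t := M) (fun a e => a ∈ e) (fun a ha => ?_) fun e he => ?_
  · obtain ⟨e, he, hae⟩ := hsat a (mem_of_mem_erase ha) (ne_of_mem_erase ha)
    exact ⟨e, he, hae⟩
  · obtain ⟨a, -, -, b, hb, rfl⟩ := hform e he
    have hxa : ∀ x ∈ H.erase u, x ∈ s(a, b) → x = a := fun x hx hxe =>
      (Sym2.mem_iff.1 hxe).resolve_right fun h => hHI x (mem_of_mem_erase hx) (h ▸ hb)
    rintro x ⟨hx, hxe⟩ y ⟨hy, hye⟩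
    exact (hxa x hx hxe).trans (hxa y hy hye).symm

lemma card_add_card_sub_one_le_mm [Fintype V] (hHI : ∀ x ∈ H, x ∉ I)
    (hrel : ∀ v ∈ H, ∃ M : Finset (Sym2 V), IsMatching G M ∧
      (∀ e ∈ M, ∃ a ∈ H, a ≠ v ∧ ∃ b ∈ I, e = s(a, b)) ∧
      ∀ a ∈ H, a ≠ v → ∃ e ∈ M, a ∈ e)
    {u : V} (hu : u ∈ H) {K : Finset (Sym2 V)} (hK : IsMatching G K)
    (hKout : ∀ e ∈ K, ∀ v ∈ e, (v ∈ H → v = u) ∧ v ∉ I) : K.card + H.card - 1 ≤ mm G := by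
  obtain ⟨M, hM, hform, hsat⟩ := hrel u hu
  have hdisj : ∀ e ∈ K, ∀ f ∈ M, ∀ v ∈ e, v ∉ f := by
    intro e he f hf v hve hvf
    obtain ⟨a, ha, hau, b, hb, rfl⟩ := hform f hf
    obtain ⟨hvH, hvI⟩ := hKout e he v hve
    rcases Sym2.mem_iff.1 hvf with rfl | rfl
    · exact hau (hvH ha)
    · exact hvI hb
  have hle := le_mm (hK.union hM hdisj)
  rw [card_union_of_forall_notMem hdisj] at hle
  have := card_sub_one_le_card_of_saturating hHI hform hsat
  omega

lemma exists_lift_of_mem_relaxedCrownReduced (hHI : ∀ x ∈ H, x ∉ I)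
    {M' : Finset (Sym2 (Option V))} (hM' : IsMatching (relaxedCrownReduced G H I) M') {b : V}
    (hb : s(none, some b) ∈ M') : ∃ u ∈ H, ∃ K : Finset (Sym2 V), IsMatching G K ∧
      K.card = M'.card ∧ ∀ e ∈ K, ∀ v ∈ e, (v ∈ H → v = u) ∧ v ∉ I := by
  obtain ⟨⟨hbH, hbI⟩, u, hu, hub⟩ := hM'.1 _ hb
  set K := M'.erase s(none, some b)
  have hK : IsMatching (relaxedCrownReduced G H I) K := hM'.subset (erase_subset _ _)
  have hKcard : (eraseNoneEdges K).card = M'.card - 1 := by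
    rw [card_eraseNoneEdges, card_erase_of_mem hb]
    exact fun e he hwe => (mem_erase.1 he).1 <|
      hM'.eq_of_mem (mem_erase.1 he).2 hb hwe (Sym2.mem_mk_left _ _)
  have hdisj : ∀ e ∈ ({s(u, b)} : Finset (Sym2 V)), ∀ f ∈ eraseNoneEdges K, ∀ v ∈ e, v ∉ f := by
    intro e he f hf v hve hvf
    rw [mem_singleton.1 he] at hve
    rcases Sym2.mem_iff.1 hve with rfl | rfl
    · exact (notMem_of_mem_eraseNoneEdges hK hf hvf).1 hu
    · have hfK := mem_preimage.1 hf
      exact (mem_erase.1 hfK).1 (hM'.eq_of_mem (mem_erase.1 hfK).2 hb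
        (Sym2.mem_map.2 ⟨v, hvf, rfl⟩) (Sym2.mem_mk_right _ _))
  refine ⟨u, hu, _, (IsMatching.singleton hub).union hK.eraseNoneEdges hdisj, ?_, ?_⟩
  · rw [card_union_of_forall_notMem hdisj, card_singleton, hKcard]
    have : 0 < M'.card := card_pos.2 ⟨_, hb⟩
    omega
  · intro e he v hve
    rcases mem_union.1 he with he | he
    · rw [mem_singleton.1 he] at hve
      rcases Sym2.mem_iff.1 hve with rfl | rfl
      · exact ⟨fun _ => rfl, hHI v hu⟩
      · exact ⟨fun h => absurd h hbH, hbI⟩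
    · obtain ⟨hvH, hvI⟩ := notMem_of_mem_eraseNoneEdges hK he hve
      exact ⟨fun h => absurd h hvH, hvI⟩

theorem mm_relaxedCrownReduced_add_card_sub_one_le [Fintype V] (hHI : ∀ x ∈ H, x ∉ I)
    (hHne : H.Nonempty)
    (hrel : ∀ v ∈ H, ∃ M : Finset (Sym2 V), IsMatching G M ∧
      (∀ e ∈ M, ∃ a ∈ H, a ≠ v ∧ ∃ b ∈ I, e = s(a, b)) ∧
      ∀ a ∈ H, a ≠ v → ∃ e ∈ M, a ∈ e) :
    mm (relaxedCrownReduced G H I) + H.card - 1 ≤ mm G := by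
  obtain ⟨M', hM', hcard⟩ := exists_isMatching_card_eq_mm (relaxedCrownReduced G H I)
  obtain ⟨u, hu, K, hK, hKcard, hKout⟩ : ∃ u ∈ H, ∃ K : Finset (Sym2 V), IsMatching G K ∧
      K.card = M'.card ∧ ∀ e ∈ K, ∀ v ∈ e, (v ∈ H → v = u) ∧ v ∉ I := by
    by_cases hw : ∃ e ∈ M', none ∈ e
    · obtain ⟨e, he, hwe⟩ := hw
      obtain ⟨_ | b, rfl⟩ := Sym2.mem_iff_exists.1 hwe
      · exact (hM'.1 _ he).elim
      exact exists_lift_of_mem_relaxedCrownReduced hHI hM' he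
    · push Not at hw
      obtain ⟨u, hu⟩ := hHne
      refine ⟨u, hu, _, hM'.eraseNoneEdges, card_eraseNoneEdges hw, fun e he v hve => ?_⟩
      obtain ⟨hvH, hvI⟩ := notMem_of_mem_eraseNoneEdges hM' he hve
      exact ⟨fun h => absurd h hvH, hvI⟩
  rw [← hcard, ← hKcard]
  exact card_add_card_sub_one_le_mm hHI hrel hu hK hKout

lemma isCrown_of_card_le (hIne : I.Nonempty) (hind : ∀ a ∈ I, ∀ b ∈ I, ¬ G.Adj a b)
    (hN : ∀ b, b ∈ H ↔ ∃ a ∈ I, G.Adj a b) {M : Finset (Sym2 V)} (hM : IsMatching G M)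
    (hMH : ∀ e ∈ M, ∃ v ∈ H, v ∈ e) (hcard : H.card ≤ M.card)
    (hMHI : ∀ e ∈ M, ∀ v ∈ e, v ∈ H ∨ v ∈ I) : IsCrown G H I := by
  refine ⟨hIne, hind, hN, M, hM, fun e he => ?_, fun a ha => hM.exists_mem_of_card_le hMH hcard ha⟩
  obtain ⟨a, ha, hae⟩ := hMH e he
  obtain ⟨b, rfl⟩ := Sym2.mem_iff_exists.1 hae
  have hab : a ≠ b := G.ne_of_adj (hM.1 _ he)
  refine ⟨a, ha, b, (hMHI _ he b (Sym2.mem_mk_right _ _)).resolve_left fun hb => hab ?_, rfl⟩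
  exact hM.eq_of_mem_of_card_le hMH hcard he ha hb hae (Sym2.mem_mk_right _ _)

lemma IsMatching.image_some {M : Finset (Sym2 V)} (hM : IsMatching G M)
    (hout : ∀ e ∈ M, ∀ v ∈ e, v ∉ H ∧ v ∉ I) :
    IsMatching (relaxedCrownReduced G H I) (M.image (Sym2.map some)) := by
  refine hM.image_map (Option.some_injective V) fun e he => ?_
  induction e using Sym2.ind with
  | h x y =>
    have hx := hout _ he x (Sym2.mem_mk_left _ _)
    have hy := hout _ he y (Sym2.mem_mk_right _ _)
    exact ⟨hM.1 _ he, hx.1, hx.2, hy.1, hy.2⟩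

lemma card_add_one_le_mm_relaxedCrownReduced [Fintype V] {M : Finset (Sym2 V)}
    (hM : IsMatching G M) (hout : ∀ e ∈ M, ∀ v ∈ e, v ∉ H ∧ v ∉ I) {u b : V} (hu : u ∈ H)
    (hbH : b ∉ H) (hbI : b ∉ I) (hub : G.Adj u b) (hbM : ∀ e ∈ M, b ∉ e) :
    M.card + 1 ≤ mm (relaxedCrownReduced G H I) := by
  have hwb : (relaxedCrownReduced G H I).Adj none (some b) := ⟨⟨hbH, hbI⟩, u, hu, hub⟩
  have hdisj : ∀ e ∈ ({s(none, some b)} : Finset (Sym2 (Option V))),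
      ∀ f ∈ M.image (Sym2.map some), ∀ v ∈ e, v ∉ f := by
    intro e he f hf v hve hvf
    rw [mem_singleton.1 he] at hve
    obtain ⟨g, hg, rfl⟩ := mem_image.1 hf
    obtain ⟨x, hx, rfl⟩ := Sym2.mem_map.1 hvf
    rcases Sym2.mem_iff.1 hve with h | h
    · cases h
    · cases h
      exact hbM g hg hx
  have hle := le_mm ((IsMatching.singleton hwb).union (hM.image_some hout) hdisj)
  rwa [card_union_of_forall_notMem hdisj, card_singleton,
    card_image_of_injective _ (Sym2.map.injective (Option.some_injective V)), add_comm] at hle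

theorem mm_le_mm_relaxedCrownReduced_add_card_sub_one [Fintype V]
    (hcf : ∀ H' I' : Finset V, ¬ IsCrown G H' I') (hIne : I.Nonempty)
    (hind : ∀ a ∈ I, ∀ b ∈ I, ¬ G.Adj a b) (hN : ∀ b, b ∈ H ↔ ∃ a ∈ I, G.Adj a b) :
    mm G ≤ mm (relaxedCrownReduced G H I) + H.card - 1 := by
  refine mm_le fun M hM => ?_
  set Mbd := M.filter fun e => ∃ v ∈ H, v ∈ e
  set Min := M.filter fun e => ¬ ∃ v ∈ H, v ∈ e
  have hsplit : Mbd.card + Min.card = M.card := card_filter_add_card_filter_not _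
  have hMbd : IsMatching G Mbd := hM.subset (filter_subset _ _)
  have hMin : IsMatching G Min := hM.subset (filter_subset _ _)
  have hMbdH : ∀ e ∈ Mbd, ∃ v ∈ H, v ∈ e := fun e he => (mem_filter.1 he).2
  have hMin_out : ∀ e ∈ Min, ∀ v ∈ e, v ∉ H ∧ v ∉ I := by
    intro e he v hve
    obtain ⟨heM, hnH⟩ := mem_filter.1 he
    have hadj := hM.1 e heM
    rw [← Sym2.other_spec hve, SimpleGraph.mem_edgeSet] at hadj
    exact ⟨fun hv => hnH ⟨v, hv, hve⟩,
      fun hv => hnH ⟨_, (hN _).2 ⟨v, hv, hadj⟩, Sym2.other_mem hve⟩⟩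
  have hMin_le : Min.card ≤ mm (relaxedCrownReduced G H I) := by
    simpa [card_image_of_injective _ (Sym2.map.injective (Option.some_injective V))]
      using le_mm (hMin.image_some hMin_out)
  rcases (hMbd.card_le_of_forall_exists_mem hMbdH).lt_or_eq with hlt | heq
  · omega
  by_cases hout : ∃ e ∈ Mbd, ∃ b ∈ e, b ∉ H ∧ b ∉ I
  · obtain ⟨e, he, b, hbe, hbH, hbI⟩ := hout
    obtain ⟨u, hu, hue⟩ := hMbdH e he
    have hbMin : ∀ f ∈ Min, b ∉ f := fun f hf hbf =>
      (mem_filter.1 hf).2 (hM.eq_of_mem (mem_filter.1 hf).1 (mem_filter.1 he).1 hbf hbe ▸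
        hMbdH e he)
    have := card_add_one_le_mm_relaxedCrownReduced hMin hMin_out hu hbH hbI
      (hMbd.adj he hue hbe (ne_of_mem_of_not_mem hu hbH)) hbMin
    omega
  · push Not at hout
    refine absurd (isCrown_of_card_le hIne hind hN hMbd hMbdH heq.ge fun e he v hve => ?_)
      (hcf H I)
    exact or_iff_not_imp_left.2 (hout e he v hve)

end RelaxedCrown

/-- Relaxed crown rule: if `G` is crown-free and `(H, I)` is a (nonempty) relaxed
crown (`I` independent, `H = N(I)`, and for every `v ∈ H` there is a matching
between `H \ {v}` and `I` saturating `H \ {v}`), and `G'` is obtained by removing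
`H ∪ I` and adding a new vertex `w` adjacent to all former outside neighbors of `H`,
then `mm(G) = mm(G') + |H| - 1`. -/
theorem stmt8 {V : Type*} [Fintype V] [DecidableEq V] (G : SimpleGraph V)
    (H I : Finset V)
    (hcf : ∀ H' I' : Finset V, ¬ IsCrown G H' I')
    (hIne : I.Nonempty)
    (hind : ∀ a ∈ I, ∀ b ∈ I, ¬ G.Adj a b)
    (hN : ∀ b, b ∈ H ↔ ∃ a ∈ I, G.Adj a b)
    (hrel : ∀ v ∈ H, ∃ M : Finset (Sym2 V), IsMatching G M ∧
      (∀ e ∈ M, ∃ a ∈ H, a ≠ v ∧ ∃ b ∈ I, e = s(a, b)) ∧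
      ∀ a ∈ H, a ≠ v → ∃ e ∈ M, a ∈ e) :
    mm G = mm (relaxedCrownReduced G H I) + H.card - 1 := by
  have hHne : H.Nonempty := by
    rw [nonempty_iff_ne_empty]
    rintro rfl
    exact hcf ∅ I ⟨hIne, hind, hN, ∅, ⟨by simp, by simp⟩, by simp, by simp⟩
  exact le_antisymm (mm_le_mm_relaxedCrownReduced_add_card_sub_one hcf hIne hind hN)
    (mm_relaxedCrownReduced_add_card_sub_one_le
      (fun _ hx => notMem_of_mem_neighborhood hind hN hx) hHne hrel)
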